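/- arXiv:2209.02823 — 2 statements merged into one kernel-verified Lean document; each statement's English description precedes it below -/
import Mathlib

section
/- Let n ≥ 2 and μ be a finite nonnegative Radon measure on the open ball B₂ of radius 2 in ℝⁿ. Then there exists a point p on the unit sphere S^{n-1} and a dimensional constant c(n) such that μ(B_r(p) ∩ B₂) ≤ c(n) μ(B₂) r^{n-1} for all r > 0. -/
/-!
Suppose every point `p` of the unit sphere of a `d`-dimensional space carries a radius `r_p` with
`ν(B_{r_p}(p)) > c r_p^{d-1} ν(E)`. Since `ν(B) ≤ ν(E)`, these radii are small, and Vitali's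
lemma yields disjoint balls `B_{r_a}(a)` whose 5-fold enlargements cover the sphere; disjointness
gives `c ∑ r_a^{d-1} ≤ 1`. On the other hand the cones over the caps of radius `ρ_a = 5 r_a`,
cut off at radius 1, cover the punctured unit ball, and each such cone is covered by about
`1/ρ` balls of radius `2ρ`, so its volume is `O(ρ^{d-1})`. Hence `∑ r_a^{d-1}` is bounded below,
which is absurd for `c = 10^d`. The theorem is the case `ν = μ|B₂`.
-/

open MeasureTheory Metric Set Module

theorem tsum_le_one_of_pairwiseDisjoint {ι α : Type*} [MeasurableSpace α] {ν : Measure α}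
    [IsFiniteMeasure ν] (hν : ν univ ≠ 0) {u : Set ι} (hu : u.Countable) {s : ι → Set α}
    (hd : u.PairwiseDisjoint s) (hs : ∀ a ∈ u, MeasurableSet (s a)) {w : ι → ENNReal}
    (hw : ∀ a ∈ u, w a * ν univ ≤ ν (s a)) : ∑' a : u, w a ≤ 1 := by
  rw [← ENNReal.mul_le_mul_iff_left hν (measure_ne_top ν univ), one_mul, ← ENNReal.tsum_mul_right]
  calc ∑' a : u, w a * ν univ ≤ ∑' a : u, ν (s a) := ENNReal.tsum_le_tsum fun a => hw a a.2
    _ = ν (⋃ a ∈ u, s a) := (measure_biUnion hu hd hs).symm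
    _ ≤ ν univ := measure_mono (subset_univ _)

theorem lt_one_of_ofReal_mul_measure_univ_lt {α : Type*} [MeasurableSpace α] {ν : Measure α}
    {c : ℝ} {s : Set α} (h : ENNReal.ofReal c * ν univ < ν s) : c < 1 := by
  by_contra! hc
  refine h.not_ge ((measure_mono (subset_univ s)).trans ?_)
  calc ν univ = 1 * ν univ := (one_mul _).symm
    _ ≤ _ := by gcongr; exact ENNReal.one_le_ofReal.2 hc

theorem exists_countable_pairwiseDisjoint_closedBall_cover_five_mul {α : Type*}
    [PseudoMetricSpace α] [TopologicalSpace.SeparableSpace α] (t : Set α) {r : α → ℝ} {R : ℝ}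
    (hr0 : ∀ a ∈ t, 0 < r a) (hrR : ∀ a ∈ t, r a ≤ R) :
    ∃ u ⊆ t, u.Countable ∧ u.PairwiseDisjoint (fun a => closedBall a (r a)) ∧
      t ⊆ ⋃ a ∈ u, closedBall a (5 * r a) := by
  obtain ⟨u, hut, hdisj, hcov⟩ :=
    Vitali.exists_disjoint_subfamily_covering_enlargement_closedBall t id r R hrR 5 (by norm_num)
  refine ⟨u, hut, hdisj.countable_of_nonempty_interior fun a ha =>
    ⟨a, mem_interior_iff_mem_nhds.2 (closedBall_mem_nhds a (hr0 a (hut ha)))⟩, hdisj, ?_⟩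
  intro p hp
  obtain ⟨a, ha, hpa⟩ := hcov p hp
  exact mem_biUnion ha (hpa (mem_closedBall_self (hr0 p hp).le))

variable {E : Type*} [NormedAddCommGroup E] [NormedSpace ℝ E]

def radialSector (q : E) (ρ : ℝ) : Set E :=
  closedBall 0 1 ∩ (fun x : E => ‖x‖⁻¹ • x) ⁻¹' closedBall q ρ

theorem dist_norm_smul_eq_norm_mul_dist (x q : E) :
    dist x (‖x‖ • q) = ‖x‖ * dist (‖x‖⁻¹ • x) q := by
  rcases eq_or_ne x 0 with rfl | hx
  · simp
  calc dist x (‖x‖ • q) = dist (‖x‖ • ‖x‖⁻¹ • x) (‖x‖ • q) := by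
        rw [smul_inv_smul₀ (norm_ne_zero_iff.2 hx)]
    _ = ‖x‖ * dist (‖x‖⁻¹ • x) q := by rw [dist_smul₀, norm_norm]

theorem radialSector_subset_biUnion_closedBall {q : E} (hq : ‖q‖ = 1) {ρ : ℝ} (hρ : 0 < ρ) :
    radialSector q ρ ⊆
      ⋃ j ∈ Finset.range (⌊ρ⁻¹⌋₊ + 1), closedBall (((j : ℝ) * ρ) • q) (2 * ρ) := by
  rintro x ⟨hx, hxq⟩
  rw [mem_closedBall_zero_iff] at hx
  rw [mem_preimage, mem_closedBall] at hxq
  set j := ⌊‖x‖ / ρ⌋₊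
  have hj_le : (j : ℝ) * ρ ≤ ‖x‖ := (le_div_iff₀ hρ).1 (Nat.floor_le (by positivity))
  have hj_gt : ‖x‖ < (j + 1) * ρ := (div_lt_iff₀ hρ).1 (Nat.lt_floor_add_one _)
  have hjN : j ≤ ⌊ρ⁻¹⌋₊ :=
    Nat.floor_le_floor (by rw [div_eq_mul_inv]; nlinarith [inv_pos.2 hρ])
  refine mem_biUnion (Finset.mem_range_succ_iff.2 hjN) ?_
  have h_angular : dist x (‖x‖ • q) ≤ ρ := by
    rw [dist_norm_smul_eq_norm_mul_dist]
    nlinarith [norm_nonneg x, dist_nonneg (x := ‖x‖⁻¹ • x) (y := q)]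
  have h_radial : dist (‖x‖ • q) (((j : ℝ) * ρ) • q) ≤ ρ := by
    rw [dist_eq_norm, ← sub_smul, norm_smul, hq, mul_one, Real.norm_of_nonneg (by linarith)]
    linarith
  calc dist x (((j : ℝ) * ρ) • q) ≤ dist x (‖x‖ • q) + dist (‖x‖ • q) (((j : ℝ) * ρ) • q) :=
        dist_triangle _ _ _
    _ ≤ 2 * ρ := by linarith

variable [FiniteDimensional ℝ E] [MeasurableSpace E] [BorelSpace E]

theorem measure_radialSector_le (μ : Measure E) [μ.IsAddHaarMeasure] {q : E} (hq : ‖q‖ = 1)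
    {ρ : ℝ} (hρ : 0 < ρ) :
    μ (radialSector q ρ) ≤
      ENNReal.ofReal ((1 + ρ) * 2 ^ finrank ℝ E * ρ ^ (finrank ℝ E - 1)) * μ (ball 0 1) := by
  have : Nontrivial E := ⟨q, 0, by rintro rfl; simp at hq⟩
  obtain ⟨d, hd⟩ : ∃ d, finrank ℝ E = d + 1 := Nat.exists_eq_add_one.2 finrank_pos
  set N := ⌊ρ⁻¹⌋₊
  have hN : (N + 1) * ρ ≤ 1 + ρ := by
    have := mul_le_mul_of_nonneg_right (Nat.floor_le (inv_pos.2 hρ).le) hρ.le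
    rw [inv_mul_cancel₀ hρ.ne'] at this
    linarith
  calc _ ≤ μ (⋃ j ∈ Finset.range (N + 1), closedBall (((j : ℝ) * ρ) • q) (2 * ρ)) :=
        measure_mono (radialSector_subset_biUnion_closedBall hq hρ)
    _ ≤ ∑ j ∈ Finset.range (N + 1), μ (closedBall (((j : ℝ) * ρ) • q) (2 * ρ)) :=
        measure_biUnion_finset_le _ _
    _ = ENNReal.ofReal ((N + 1) * (2 * ρ) ^ finrank ℝ E) * μ (ball 0 1) := by
        simp only [Measure.addHaar_closedBall μ _ (by positivity : 0 ≤ 2 * ρ), Finset.sum_const,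
          Finset.card_range, nsmul_eq_mul]
        rw [← mul_assoc, ENNReal.ofReal_mul (by positivity)]
        norm_cast
    _ ≤ _ := by
        gcongr ENNReal.ofReal ?_ * _
        rw [hd, Nat.add_sub_cancel]
        calc ((N : ℝ) + 1) * (2 * ρ) ^ (d + 1) = ((N + 1) * ρ) * (2 ^ (d + 1) * ρ ^ d) := by ring
          _ ≤ (1 + ρ) * (2 ^ (d + 1) * ρ ^ d) := by gcongr
          _ = (1 + ρ) * 2 ^ (d + 1) * ρ ^ d := by ring

theorem one_le_two_pow_mul_tsum_pow_of_sphere_subset_biUnion [Nontrivial E] {u : Set E}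
    (hu : u.Countable) (hus : u ⊆ sphere 0 1) {ρ : E → ℝ} (hρ0 : ∀ a ∈ u, 0 < ρ a)
    (hρ1 : ∀ a ∈ u, ρ a ≤ 1) (hcov : sphere (0 : E) 1 ⊆ ⋃ a ∈ u, closedBall a (ρ a)) :
    1 ≤ ENNReal.ofReal (2 ^ (finrank ℝ E + 1)) *
      ∑' a : u, ENNReal.ofReal (ρ a ^ (finrank ℝ E - 1)) := by
  set μ : Measure E := Measure.addHaar
  set d := finrank ℝ E
  -- The origin has no meaningful radial projection (`‖0‖⁻¹ • 0 = 0`), but it is a null set.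
  have hsub : closedBall (0 : E) 1 \ {0} ⊆ ⋃ a ∈ u, radialSector a (ρ a) := by
    rintro x ⟨hx, hx0 : x ≠ 0⟩
    have : ‖x‖⁻¹ • x ∈ sphere (0 : E) 1 := by
      rw [mem_sphere_zero_iff_norm, norm_smul, norm_inv, norm_norm,
        inv_mul_cancel₀ (norm_ne_zero_iff.2 hx0)]
    obtain ⟨a, ha, hxa⟩ := mem_iUnion₂.1 (hcov this)
    exact mem_biUnion ha ⟨hx, hxa⟩
  have hsector : ∀ a : u, μ (radialSector a (ρ a)) ≤
      ENNReal.ofReal (2 ^ (d + 1)) * ENNReal.ofReal (ρ a ^ (d - 1)) * μ (ball 0 1) := by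
    rintro ⟨a, ha⟩
    refine (measure_radialSector_le μ (mem_sphere_zero_iff_norm.1 (hus ha)) (hρ0 a ha)).trans ?_
    rw [← ENNReal.ofReal_mul (by positivity)]
    gcongr ENNReal.ofReal ?_ * _
    have := (hρ0 a ha).le
    calc (1 + ρ a) * 2 ^ d * ρ a ^ (d - 1) ≤ 2 * 2 ^ d * ρ a ^ (d - 1) := by
          gcongr; linarith [hρ1 a ha]
      _ = 2 ^ (d + 1) * ρ a ^ (d - 1) := by ring
  rw [← ENNReal.mul_le_mul_iff_left (measure_ball_pos μ 0 one_pos).ne' measure_ball_lt_top.ne,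
    one_mul]
  calc μ (ball 0 1) = μ (closedBall (0 : E) 1 \ {0}) := by
        rw [measure_sdiff_null (measure_singleton 0), Measure.addHaar_closedBall μ 0 zero_le_one,
          one_pow, ENNReal.ofReal_one, one_mul]
    _ ≤ ∑' a : u, μ (radialSector a (ρ a)) := (measure_mono hsub).trans (measure_biUnion_le μ hu _)
    _ ≤ ∑' a : u, ENNReal.ofReal (2 ^ (d + 1)) * ENNReal.ofReal (ρ a ^ (d - 1)) * μ (ball 0 1) :=
        ENNReal.tsum_le_tsum hsector
    _ = _ := by rw [ENNReal.tsum_mul_right, ENNReal.tsum_mul_left]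

theorem exists_mem_sphere_forall_measure_ball_le [Nontrivial E] (ν : Measure E)
    [IsFiniteMeasure ν] :
    ∃ p ∈ sphere (0 : E) 1, ∀ r > 0,
      ν (ball p r) ≤ ENNReal.ofReal (10 ^ finrank ℝ E * r ^ (finrank ℝ E - 1)) * ν univ := by
  obtain ⟨k, hk⟩ : ∃ k, finrank ℝ E = k + 1 := Nat.exists_eq_add_one.2 finrank_pos
  simp only [hk, Nat.add_sub_cancel]
  by_contra! h
  choose! r hr0 hr using h
  have hr_small : ∀ p ∈ sphere (0 : E) 1, r p ≤ 1 / 5 := by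
    intro p hp
    have hc := lt_one_of_ofReal_mul_measure_univ_lt (hr p hp)
    by_contra! hlt
    have : (1 : ℝ) ≤ 10 ^ (k + 1) * r p ^ k :=
      calc (1 : ℝ) ≤ 10 * 2 ^ k := by linarith [one_le_pow₀ (M₀ := ℝ) (a := 2) one_le_two (n := k)]
        _ = 10 ^ (k + 1) * (1 / 5) ^ k := by rw [pow_succ', mul_assoc, ← mul_pow]; norm_num
        _ ≤ 10 ^ (k + 1) * r p ^ k := by gcongr
    linarith
  obtain ⟨u, hus, hu, hdisj, hcover⟩ :=
    exists_countable_pairwiseDisjoint_closedBall_cover_five_mul _ hr0 hr_small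
  set S := ∑' a : u, ENNReal.ofReal (r a ^ k)
  have h_lower : 1 ≤ ENNReal.ofReal (2 ^ (k + 2) * 5 ^ k) * S := by
    have := one_le_two_pow_mul_tsum_pow_of_sphere_subset_biUnion hu hus
      (fun a ha => by linarith [hr0 a (hus ha)]) (fun a ha => by linarith [hr_small a (hus ha)])
      hcover
    simp only [hk, Nat.add_sub_cancel, mul_pow,
      ENNReal.ofReal_mul (by positivity : (0 : ℝ) ≤ 5 ^ k), ENNReal.tsum_mul_left] at this
    rwa [ENNReal.ofReal_mul (by positivity), mul_assoc]
  obtain ⟨p, hp⟩ := (NormedSpace.sphere_nonempty (x := (0 : E))).2 zero_le_one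
  have hν : ν univ ≠ 0 :=
    ((pos_of_gt (hr p hp)).trans_le (measure_mono (subset_univ _))).ne'
  have h_upper : ENNReal.ofReal (10 ^ (k + 1)) * S ≤ 1 := by
    rw [← ENNReal.tsum_mul_left]
    simp only [← ENNReal.ofReal_mul (by positivity : (0 : ℝ) ≤ 10 ^ (k + 1))]
    exact tsum_le_one_of_pairwiseDisjoint hν hu (hdisj.mono fun a => ball_subset_closedBall)
      (fun _ _ => measurableSet_ball) fun a ha => (hr a (hus ha)).le
  have hcontra : ENNReal.ofReal (10 ^ (k + 1)) ≤ ENNReal.ofReal (2 ^ (k + 2) * 5 ^ k) :=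
    calc ENNReal.ofReal (10 ^ (k + 1)) ≤ ENNReal.ofReal (10 ^ (k + 1)) *
          (ENNReal.ofReal (2 ^ (k + 2) * 5 ^ k) * S) := le_mul_of_one_le_right' h_lower
      _ = ENNReal.ofReal (2 ^ (k + 2) * 5 ^ k) * (ENNReal.ofReal (10 ^ (k + 1)) * S) := by ring
      _ ≤ ENNReal.ofReal (2 ^ (k + 2) * 5 ^ k) := mul_le_of_le_one_right' h_upper
  rw [ENNReal.ofReal_le_ofReal_iff (by positivity)] at hcontra
  rw [show (10 : ℝ) ^ (k + 1) = 10 * (2 * 5) ^ k by ring, mul_pow, pow_add] at hcontra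
  linarith [mul_pos (pow_pos (two_pos : (0 : ℝ) < 2) k) (pow_pos (by norm_num : (0 : ℝ) < 5) k)]

/-- Let `n ≥ 2` and `μ` be a finite nonnegative Radon measure on the open
ball `B₂` of radius `2` in `ℝⁿ`. Then there exist a dimensional constant `c = c(n) > 0` and a
point `p` on the unit sphere `S^{n-1}` such that
`μ(B_r(p) ∩ B₂) ≤ c · μ(B₂) · r^{n-1}` for all `r > 0`. -/
theorem stmt0 (n : ℕ) (hn : 2 ≤ n) :
    ∃ c : ℝ, 0 < c ∧
      ∀ (μ : Measure (EuclideanSpace ℝ (Fin n))), IsFiniteMeasure μ →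
        ∃ p : EuclideanSpace ℝ (Fin n), ‖p‖ = 1 ∧
          ∀ r : ℝ, 0 < r →
            μ (ball p r ∩ ball 0 2) ≤ ENNReal.ofReal (c * r ^ (n - 1)) * μ (ball 0 2) := by
  have : NeZero n := ⟨by omega⟩
  refine ⟨10 ^ n, by positivity, fun μ _ => ?_⟩
  obtain ⟨p, hp, hball⟩ := exists_mem_sphere_forall_measure_ball_le (μ.restrict (ball 0 2))
  refine ⟨p, mem_sphere_zero_iff_norm.1 hp, fun r hr => ?_⟩
  simpa only [Measure.restrict_apply measurableSet_ball, Measure.restrict_apply_univ,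
    finrank_euclideanSpace_fin] using hball r hr
end

section
/- Let μ be a finite nonnegative Radon measure on a bounded open set Ω ⊆ ℝⁿ, and let p ∈ Ω satisfy μ(B_r(p)) ≤ C r^d for all small r > 0, where 0 ≤ d < n − α and α ∈ (1, n). Then for x in a small punctured ball around p, the contributions to the Riesz potential from outside a fixed ball and from the region away from the dyadic annulus containing x satisfy: ∫_{Ω \ Ω^δ_i(p)} |x − y|^{α−n} dμ(y) ≤ C' |x − p|^{-(n−α−d)} whenever 2^{-i}δ ≤ |x − p| ≤ 2^{-i+1}δ. -/
/-!
Write `R = |x − p|`. Since `2^{-i}δ ≤ R ≤ 2^{-i+1}δ`, the complement of the annulus `Ω^δ_i(p)`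
lies in `B̄(p, R/2) ∪ {y : |y − p| ≥ 2R}`. On the ball, `|x − y| ≥ R/2` and its mass is at most
`K R^d`, giving `2^{n−α} K R^{α−n+d}`. The far region is covered by the dyadic shells
`2^k·2R ≤ |y − p| < 2^{k+1}·2R`, on which `|x − y| ≥ 2^k R` and the mass is at most
`K (2^k·4R)^d`; their contributions form a geometric series of ratio `2^{α−n+d} < 1`.
The growth bound `μ(B_r(p)) ≤ C r^d` for small `r` extends to all `r` with a larger constant `K`,
because `μ` is finite and `d ≥ 0`.
-/

open MeasureTheory Metric Set
open scoped ENNReal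

/-- The open dyadic annulus `Ω^δ_i(p) = {y : 2^{-i-1}δ < |y − p| < 2^{-i+2}δ}`. -/
def annO (n : ℕ) (p : EuclideanSpace ℝ (Fin n)) (δ : ℝ) (i : ℕ) :
    Set (EuclideanSpace ℝ (Fin n)) :=
  {y | dist y p ∈ Ioo ((2 : ℝ) ^ (-(i : ℝ) - 1) * δ) ((2 : ℝ) ^ (-(i : ℝ) + 2) * δ)}

section RieszPotential

variable {X : Type*} [PseudoMetricSpace X] {p x : X}

def dyadicShell (p : X) (r : ℝ) (k : ℕ) : Set X :=
  {y | 2 ^ k * r ≤ dist y p ∧ dist y p < 2 ^ (k + 1) * r}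

theorem subset_iUnion_dyadicShell {r : ℝ} (hr : 0 < r) :
    {y | r ≤ dist y p} ⊆ ⋃ k, dyadicShell p r k := fun y hy => by
  obtain ⟨k, hk, hk'⟩ := exists_nat_pow_near ((one_le_div hr).2 hy) one_lt_two
  exact mem_iUnion.2 ⟨k, (le_div_iff₀ hr).1 hk, (div_lt_iff₀ hr).1 hk'⟩

variable [MeasurableSpace X] {μ : Measure X} {s d K : ℝ}

theorem exists_pos_forall_measure_ball_le_mul_rpow [IsFiniteMeasure μ] {C r₀ : ℝ}
    (hd : 0 ≤ d) (hr₀ : 0 < r₀)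
    (h : ∀ r ∈ Ioc 0 r₀, μ (ball p r) ≤ ENNReal.ofReal (C * r ^ d)) :
    ∃ K > 0, ∀ r > 0, μ (ball p r) ≤ ENNReal.ofReal (K * r ^ d) := by
  set M := μ.real univ
  have hM : 0 ≤ M / r₀ ^ d := by positivity
  refine ⟨max C 1 + M / r₀ ^ d, by positivity, fun r hr => ?_⟩
  have hrd : 0 ≤ r ^ d := Real.rpow_nonneg hr.le d
  rcases le_or_gt r r₀ with hr' | hr'
  · refine (h r ⟨hr, hr'⟩).trans (ENNReal.ofReal_le_ofReal ?_)
    nlinarith [le_max_left C 1]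
  · have hMr : M ≤ M / r₀ ^ d * r ^ d := by
      rw [div_mul_comm]
      exact le_mul_of_one_le_left (by positivity)
        ((one_le_div (by positivity)).2 (Real.rpow_le_rpow hr₀.le hr'.le hd))
    calc μ (ball p r) ≤ μ univ := measure_mono (subset_univ _)
      _ = ENNReal.ofReal M := (ofReal_measureReal (measure_ne_top μ _)).symm
      _ ≤ _ := ENNReal.ofReal_le_ofReal (by nlinarith [le_max_right C 1])

theorem setLIntegral_edist_rpow_le {u : Set X} {c : ℝ} (hs : s ≤ 0) (hc : 0 < c)
    (h : ∀ y ∈ u, c ≤ dist x y) :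
    ∫⁻ y in u, edist x y ^ s ∂μ ≤ ENNReal.ofReal (c ^ s) * μ u := by
  rw [← setLIntegral_const]
  refine setLIntegral_mono measurable_const fun y hy => ?_
  rw [edist_dist, ENNReal.ofReal_rpow_of_pos (hc.trans_le (h y hy))]
  exact ENNReal.ofReal_le_ofReal (Real.rpow_le_rpow_of_nonpos hc (h y hy) hs)

theorem setLIntegral_closedBall_edist_rpow_le (hs : s ≤ 0)
    (hK : ∀ r > 0, μ (ball p r) ≤ ENNReal.ofReal (K * r ^ d)) (hx : 0 < dist x p) :
    ∫⁻ y in closedBall p (dist x p / 2), edist x y ^ s ∂μ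
      ≤ ENNReal.ofReal (2 ^ (-s) * K * dist x p ^ (s + d)) := by
  set R := dist x p
  have hfar : ∀ y ∈ closedBall p (R / 2), R / 2 ≤ dist x y := fun y hy => by
    linarith [dist_triangle x y p, mem_closedBall.1 hy]
  have hball : closedBall p (R / 2) ⊆ ball p R := closedBall_subset_ball (by linarith)
  calc ∫⁻ y in closedBall p (R / 2), edist x y ^ s ∂μ
      ≤ ENNReal.ofReal ((R / 2) ^ s) * μ (closedBall p (R / 2)) :=
        setLIntegral_edist_rpow_le hs (by positivity) hfar
    _ ≤ ENNReal.ofReal ((R / 2) ^ s) * ENNReal.ofReal (K * R ^ d) := by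
        gcongr; exact (measure_mono hball).trans (hK R hx)
    _ = ENNReal.ofReal (2 ^ (-s) * K * R ^ (s + d)) := by
        rw [← ENNReal.ofReal_mul (by positivity), Real.div_rpow hx.le zero_le_two,
          Real.rpow_neg zero_le_two, Real.rpow_add hx]
        ring_nf

theorem setLIntegral_dyadicShell_edist_rpow_le (hs : s ≤ 0)
    (hK : ∀ r > 0, μ (ball p r) ≤ ENNReal.ofReal (K * r ^ d)) (hx : 0 < dist x p) (k : ℕ) :
    ∫⁻ y in dyadicShell p (2 * dist x p) k, edist x y ^ s ∂μ
      ≤ ENNReal.ofReal (4 ^ d * K * dist x p ^ (s + d)) * ENNReal.ofReal (2 ^ (s + d)) ^ k := by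
  set R := dist x p
  have h2k : (1 : ℝ) ≤ 2 ^ k := one_le_pow₀ one_le_two
  have hfar : ∀ y ∈ dyadicShell p (2 * R) k, 2 ^ k * R ≤ dist x y := fun y hy => by
    nlinarith [dist_triangle y x p, dist_comm x y, hy.1]
  have hball : dyadicShell p (2 * R) k ⊆ ball p (2 ^ k * (4 * R)) := fun y hy => by
    rw [mem_ball]; convert hy.2 using 1; ring
  calc ∫⁻ y in dyadicShell p (2 * R) k, edist x y ^ s ∂μ
      ≤ ENNReal.ofReal ((2 ^ k * R) ^ s) * μ (dyadicShell p (2 * R) k) :=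
        setLIntegral_edist_rpow_le hs (by positivity) hfar
    _ ≤ ENNReal.ofReal ((2 ^ k * R) ^ s) * ENNReal.ofReal (K * (2 ^ k * (4 * R)) ^ d) := by
        gcongr; exact (measure_mono hball).trans (hK _ (by positivity))
    _ = ENNReal.ofReal (4 ^ d * K * R ^ (s + d) * (2 ^ (s + d)) ^ k) := by
        rw [← ENNReal.ofReal_mul (by positivity), Real.mul_rpow (by positivity) hx.le,
          Real.mul_rpow (by positivity) (by positivity), Real.mul_rpow (by positivity) hx.le,
          ← Real.rpow_mul_natCast zero_le_two, ← Real.rpow_natCast, ← Real.rpow_mul zero_le_two,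
          ← Real.rpow_mul zero_le_two, Real.rpow_add hx, add_mul, Real.rpow_add zero_lt_two,
          mul_comm s, mul_comm d]
        ring_nf
    _ = _ := by
        rw [ENNReal.ofReal_mul' (by positivity), ENNReal.ofReal_pow (by positivity)]

theorem setLIntegral_far_edist_rpow_le (hs : s ≤ 0) (hsd : s + d < 0)
    (hK : ∀ r > 0, μ (ball p r) ≤ ENNReal.ofReal (K * r ^ d)) (hx : 0 < dist x p) :
    ∫⁻ y in {y | 2 * dist x p ≤ dist y p}, edist x y ^ s ∂μ
      ≤ ENNReal.ofReal (4 ^ d / (1 - 2 ^ (s + d)) * K * dist x p ^ (s + d)) := by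
  set R := dist x p
  have hρ : (2 : ℝ) ^ (s + d) < 1 := Real.rpow_lt_one_of_one_lt_of_neg one_lt_two hsd
  calc ∫⁻ y in {y | 2 * R ≤ dist y p}, edist x y ^ s ∂μ
      ≤ ∫⁻ y in ⋃ k, dyadicShell p (2 * R) k, edist x y ^ s ∂μ :=
        lintegral_mono_set (subset_iUnion_dyadicShell (by positivity))
    _ ≤ ∑' k, ∫⁻ y in dyadicShell p (2 * R) k, edist x y ^ s ∂μ := lintegral_iUnion_le _ _
    _ ≤ ∑' k : ℕ, ENNReal.ofReal (4 ^ d * K * R ^ (s + d)) * ENNReal.ofReal (2 ^ (s + d)) ^ k :=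
        ENNReal.tsum_le_tsum (setLIntegral_dyadicShell_edist_rpow_le hs hK hx)
    _ = ENNReal.ofReal (4 ^ d / (1 - 2 ^ (s + d)) * K * R ^ (s + d)) := by
        rw [ENNReal.tsum_mul_left, ENNReal.tsum_geometric, ← ENNReal.ofReal_one,
          ← ENNReal.ofReal_sub _ (by positivity), ← ENNReal.ofReal_inv_of_pos (by linarith),
          ← ENNReal.ofReal_mul' (by linarith [inv_pos.2 (sub_pos.2 hρ)])]
        ring_nf

theorem setLIntegral_near_or_far_edist_rpow_le (hs : s ≤ 0) (hsd : s + d < 0) (hK₀ : 0 ≤ K)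
    (hK : ∀ r > 0, μ (ball p r) ≤ ENNReal.ofReal (K * r ^ d)) (hx : 0 < dist x p) :
    ∫⁻ y in closedBall p (dist x p / 2) ∪ {y | 2 * dist x p ≤ dist y p}, edist x y ^ s ∂μ
      ≤ ENNReal.ofReal ((2 ^ (-s) + 4 ^ d / (1 - 2 ^ (s + d))) * K * dist x p ^ (s + d)) := by
  have hρ : 0 < 1 - (2 : ℝ) ^ (s + d) :=
    sub_pos.2 (Real.rpow_lt_one_of_one_lt_of_neg one_lt_two hsd)
  refine (lintegral_union_le _ _ _).trans ?_
  rw [add_mul, add_mul, ENNReal.ofReal_add (by positivity) (by positivity)]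
  exact add_le_add (setLIntegral_closedBall_edist_rpow_le hs hK hx)
    (setLIntegral_far_edist_rpow_le hs hsd hK hx)

end RieszPotential

theorem stmt11_general (n : ℕ) (α d δ C : ℝ) (hd0 : 0 ≤ d)
    (hd : d < n - α) (hδ : 0 < δ)
    (Ω : Set (EuclideanSpace ℝ (Fin n)))
    (p : EuclideanSpace ℝ (Fin n))
    (μ : Measure (EuclideanSpace ℝ (Fin n))) [IsFiniteMeasure μ]
    (r₀ : ℝ) (hr₀ : 0 < r₀)
    (hgrowth : ∀ r ∈ Ioc (0 : ℝ) r₀, μ (ball p r) ≤ ENNReal.ofReal (C * r ^ d)) :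
    ∃ C' > (0 : ℝ), ∃ i₀ : ℕ, ∀ i ≥ i₀, ∀ x : EuclideanSpace ℝ (Fin n),
      dist x p ∈ Icc ((2 : ℝ) ^ (-(i : ℝ)) * δ) ((2 : ℝ) ^ (-(i : ℝ) + 1) * δ) →
        (∫⁻ y in Ω \ annO n p δ i, edist x y ^ (α - n) ∂μ)
          ≤ ENNReal.ofReal (C' * dist x p ^ (α + d - n)) := by
  obtain ⟨K, hK₀, hK⟩ := exists_pos_forall_measure_ball_le_mul_rpow hd0 hr₀ hgrowth
  have hsd : α - n + d < 0 := by linarith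
  have hρ : 0 < 1 - (2 : ℝ) ^ (α - n + d) :=
    sub_pos.2 (Real.rpow_lt_one_of_one_lt_of_neg one_lt_two hsd)
  refine ⟨(2 ^ (-(α - n)) + 4 ^ d / (1 - 2 ^ (α - n + d))) * K, by positivity, 0,
    fun i _ x ⟨hxb, hxb'⟩ => ?_⟩
  set b := (2 : ℝ) ^ (-(i : ℝ)) * δ
  have hb : 0 < b := by positivity
  have hx : 0 < dist x p := hb.trans_le hxb
  have hsub : Ω \ annO n p δ i ⊆ closedBall p (dist x p / 2) ∪ {y | 2 * dist x p ≤ dist y p} := by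
    rintro y ⟨-, hy⟩
    have e₁ : (2 : ℝ) ^ (-(i : ℝ) - 1) * δ = b / 2 := by
      rw [Real.rpow_sub two_pos, Real.rpow_one]; ring
    have e₂ : (2 : ℝ) ^ (-(i : ℝ) + 2) * δ = 4 * b := by
      rw [Real.rpow_add two_pos, Real.rpow_two]; ring
    have e₃ : (2 : ℝ) ^ (-(i : ℝ) + 1) * δ = 2 * b := by
      rw [Real.rpow_add two_pos, Real.rpow_one]; ring
    simp only [annO, mem_ofPred_eq, mem_Ioo, not_and, not_lt, e₁, e₂] at hy
    rw [e₃] at hxb'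
    by_cases hy' : dist y p ≤ dist x p / 2
    · exact Or.inl (mem_closedBall.2 hy')
    · exact Or.inr (show 2 * dist x p ≤ dist y p by linarith [hy (by linarith)])
  calc ∫⁻ y in Ω \ annO n p δ i, edist x y ^ (α - n) ∂μ
      ≤ _ := lintegral_mono_set hsub
    _ ≤ _ := setLIntegral_near_or_far_edist_rpow_le (by linarith) hsd hK₀.le hK hx
    _ = _ := by rw [show α + d - n = α - n + d by ring]

/-- Let `μ` be a finite nonnegative Radon measure on a bounded open
`Ω ⊆ ℝⁿ`, and `p ∈ Ω` with `μ(B_r(p)) ≤ C r^d` for all small `r > 0`, where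
`0 ≤ d < n − α`, `α ∈ (1, n)`. Then, for `x` with `2^{-i}δ ≤ |x − p| ≤ 2^{-i+1}δ` and `i`
large, `∫_{Ω \ Ω^δ_i(p)} |x − y|^{α−n} dμ(y) ≤ C' |x − p|^{-(n−α−d)}`. -/
theorem stmt11 (n : ℕ) (α d δ C : ℝ) (hα₁ : 1 < α) (hα₂ : α < n) (hd0 : 0 ≤ d)
    (hd : d < n - α) (hδ : 0 < δ) (hC : 0 < C)
    (Ω : Set (EuclideanSpace ℝ (Fin n))) (hΩo : IsOpen Ω) (hΩb : Bornology.IsBounded Ω)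
    (p : EuclideanSpace ℝ (Fin n)) (hp : p ∈ Ω)
    (μ : Measure (EuclideanSpace ℝ (Fin n))) [IsFiniteMeasure μ]
    (r₀ : ℝ) (hr₀ : 0 < r₀)
    (hgrowth : ∀ r ∈ Ioc (0 : ℝ) r₀, μ (ball p r) ≤ ENNReal.ofReal (C * r ^ d)) :
    ∃ C' > (0 : ℝ), ∃ i₀ : ℕ, ∀ i ≥ i₀, ∀ x : EuclideanSpace ℝ (Fin n),
      dist x p ∈ Icc ((2 : ℝ) ^ (-(i : ℝ)) * δ) ((2 : ℝ) ^ (-(i : ℝ) + 1) * δ) →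
        (∫⁻ y in Ω \ annO n p δ i, edist x y ^ (α - n) ∂μ)
          ≤ ENNReal.ofReal (C' * dist x p ^ (α + d - n)) :=
  stmt11_general n α d δ C hd0 hd hδ Ω p μ r₀ hr₀ hgrowth
end
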